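/- For any three finite strings S₁, S₂, S₃ over an alphabet α, the decoding distance satisfies the triangle inequality: d(S₁,S₃) ≤ d(S₁,S₂) + d(S₂,S₃). -/

import Mathlib

/-!
The longest common suffixes of `S₁, S₂` and of `S₂, S₃` are both suffixes of `S₂`, so the shorter
one is a common suffix of `S₁, S₃`: `min (x(S₁,S₂)) (x(S₂,S₃)) ≤ x(S₁,S₃)`. Together with
`x(S,T) ≤ min |S| |T|`, the triangle inequality is linear arithmetic.
-/

/-- Length of the longest common prefix of two lists. -/
def lcpLength {α : Type*} [DecidableEq α] : List α → List α → ℕ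
  | a :: as, b :: bs => if a = b then lcpLength as bs + 1 else 0
  | _, _ => 0

/-- `lcsLength S₁ S₂` is the length of the longest common suffix of `S₁` and `S₂`. -/
def lcsLength {α : Type*} [DecidableEq α] (S₁ S₂ : List α) : ℕ :=
  lcpLength S₁.reverse S₂.reverse

/-- The decoding distance `d(S₁,S₂) = max(|S₁|,|S₂|) − x(S₁,S₂)`, where
`x(S₁,S₂)` is the length of the longest common suffix of `S₁` and `S₂`. -/
def decodingDist {α : Type*} [DecidableEq α] (S₁ S₂ : List α) : ℕ :=
  max S₁.length S₂.length - lcsLength S₁ S₂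

section

variable {α : Type*} [DecidableEq α]

theorem lcpLength_le_min_length : ∀ s t : List α, lcpLength s t ≤ min s.length t.length
  | a :: as, b :: bs => by
    have := lcpLength_le_min_length as bs
    simp only [lcpLength, List.length_cons]
    split <;> omega
  | [], _ | _ :: _, [] => by simp [lcpLength]

theorem min_lcpLength_le_lcpLength :
    ∀ s t u : List α, min (lcpLength s t) (lcpLength t u) ≤ lcpLength s u
  | a :: as, b :: bs, c :: cs => by
    by_cases hab : a = b
    · by_cases hbc : b = c
      · have := min_lcpLength_le_lcpLength as bs cs
        simp only [lcpLength, if_pos hab, if_pos hbc, if_pos (hab.trans hbc)]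
        omega
      · simp [lcpLength, hab, hbc]
    · simp [lcpLength, hab]
  | [], _, _ | _ :: _, [], _ | _ :: _, _ :: _, [] => by simp [lcpLength]

theorem lcsLength_le_min_length (s t : List α) : lcsLength s t ≤ min s.length t.length := by
  simpa only [lcsLength, List.length_reverse] using lcpLength_le_min_length s.reverse t.reverse

theorem min_lcsLength_le_lcsLength (s t u : List α) :
    min (lcsLength s t) (lcsLength t u) ≤ lcsLength s u :=
  min_lcpLength_le_lcpLength s.reverse t.reverse u.reverse

end

/-- Triangle inequality for the decoding distance. -/
theorem decodingDist_triangle {α : Type*} [DecidableEq α] (S₁ S₂ S₃ : List α) :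
    decodingDist S₁ S₃ ≤ decodingDist S₁ S₂ + decodingDist S₂ S₃ := by
  have h₁₂ := lcsLength_le_min_length S₁ S₂
  have h₂₃ := lcsLength_le_min_length S₂ S₃
  have h₁₃ := min_lcsLength_le_lcsLength S₁ S₂ S₃
  unfold decodingDist
  omega
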